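/- arXiv:1907.06741 — 3 statements merged into one kernel-verified Lean document; each statement's English description precedes it below -/
import Mathlib

section
/- On a rectangular board with two or more non-bonding 1×1 tiles, the relative order of tiles in the x-coordinate is preserved under all tilts: if tile A is strictly west of tile B in the same row before a tilt in direction E or W, then after the tilt A is still strictly west of B (they cannot pass through each other), and analogously for the y-coordinate under N and S tilts. -/
open scoped Classical

/-- The four cardinal directions as unit vectors: N, E, S, W. -/
def Dirs : Finset (ℤ × ℤ) := {(0,1), (1,0), (0,-1), (-1,0)}

/-- Some tile of the configuration `f` occupies position `p`. -/
def Occupied {k : ℕ} (f : Fin k → ℤ × ℤ) (p : ℤ × ℤ) : Prop := ∃ i, f i = p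

/-- A tile at position `p` can move one unit in direction `d`: there is some `j ≥ 1`
such that the cells `p + d, …, p + j·d` are open, the cells strictly before `p + j·d`
are occupied (those tiles move as well), and `p + j·d` is free. -/
def Movable {k : ℕ} (O : Finset (ℤ × ℤ)) (f : Fin k → ℤ × ℤ) (d p : ℤ × ℤ) : Prop :=
  ∃ j : ℕ, 1 ≤ j ∧ (∀ i : ℕ, 1 ≤ i → i ≤ j → p + (i : ℤ) • d ∈ O) ∧
    (∀ i : ℕ, 1 ≤ i → i < j → Occupied f (p + (i : ℤ) • d)) ∧
    ¬ Occupied f (p + (j : ℤ) • d)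

/-- One step: every movable tile advances one unit in direction `d`. -/
noncomputable def mstep {k : ℕ} (O : Finset (ℤ × ℤ)) (d : ℤ × ℤ)
    (f : Fin k → ℤ × ℤ) : Fin k → ℤ × ℤ :=
  fun i => if Movable O f d (f i) then f i + d else f i

/-- A tilt: iterate steps until no tile can move (enough iterations for a fixpoint). -/
noncomputable def mtilt {k : ℕ} (O : Finset (ℤ × ℤ)) (d : ℤ × ℤ)
    (f : Fin k → ℤ × ℤ) : Fin k → ℤ × ℤ :=
  (mstep O d)^[O.card * k + 1] f

/-!
Along a line in direction `d`, a step changes the gap between two tiles by at most one, and it can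
shrink a gap of one only if the rear tile moves while the tile directly in front of it does not.
That cannot happen: the chain of tiles that lets the rear tile move passes through the front tile
and lets it move too. So a tile strictly ahead of another stays strictly ahead after every step,
hence after every tilt.
-/

def IsAhead (d p q : ℤ × ℤ) : Prop := ∃ t : ℕ, 0 < t ∧ q = p + (t : ℤ) • d

lemma isAhead_neg_iff {d p q : ℤ × ℤ} : IsAhead (-d) p q ↔ IsAhead d q p := by
  refine exists_congr fun t => and_congr_right fun _ => ?_
  rw [smul_neg, ← sub_eq_add_neg, eq_sub_iff_add_eq, eq_comm]

lemma isAhead_east_iff {p q : ℤ × ℤ} : IsAhead (1, 0) p q ↔ p.2 = q.2 ∧ p.1 < q.1 := by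
  constructor
  · rintro ⟨t, ht, rfl⟩
    simp only [Prod.smul_mk, smul_eq_mul, mul_one, mul_zero, Prod.fst_add, Prod.snd_add]
    omega
  · rintro ⟨hrow, hlt⟩
    refine ⟨(q.1 - p.1).toNat, by omega, Prod.ext ?_ ?_⟩ <;>
      simp only [Prod.smul_mk, smul_eq_mul, mul_one, mul_zero, Prod.fst_add, Prod.snd_add] <;>
      omega

lemma isAhead_north_iff {p q : ℤ × ℤ} : IsAhead (0, 1) p q ↔ p.1 = q.1 ∧ p.2 < q.2 := by
  constructor
  · rintro ⟨t, ht, rfl⟩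
    simp only [Prod.smul_mk, smul_eq_mul, mul_one, mul_zero, Prod.fst_add, Prod.snd_add]
    omega
  · rintro ⟨hcol, hlt⟩
    refine ⟨(q.2 - p.2).toNat, by omega, Prod.ext ?_ ?_⟩ <;>
      simp only [Prod.smul_mk, smul_eq_mul, mul_one, mul_zero, Prod.fst_add, Prod.snd_add] <;>
      omega

lemma add_natCast_succ_smul (p d : ℤ × ℤ) (i : ℕ) :
    p + d + (i : ℤ) • d = p + ((i + 1 : ℕ) : ℤ) • d := by
  push_cast
  rw [add_smul, one_smul]
  abel

section Step

variable {k : ℕ} {O : Finset (ℤ × ℤ)} {f : Fin k → ℤ × ℤ} {d : ℤ × ℤ}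

lemma Movable.add_of_occupied {p : ℤ × ℤ} (hm : Movable O f d p) (hocc : Occupied f (p + d)) :
    Movable O f d (p + d) := by
  obtain ⟨j, hj, hopen, hchain, hfree⟩ := hm
  obtain rfl | hj := hj.eq_or_lt
  · exact absurd (by simpa using hocc) hfree
  refine ⟨j - 1, by omega, fun i h1 h2 => ?_, fun i h1 h2 => ?_, ?_⟩
  · rw [add_natCast_succ_smul]
    exact hopen (i + 1) (by omega) (by omega)
  · rw [add_natCast_succ_smul]
    exact hchain (i + 1) (by omega) (by omega)
  · rwa [add_natCast_succ_smul, Nat.sub_add_cancel hj.le]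

lemma isAhead_mstep {a b : Fin k} (h : IsAhead d (f a) (f b)) :
    IsAhead d (mstep O d f a) (mstep O d f b) := by
  obtain ⟨t, ht, hab⟩ := h
  unfold mstep
  by_cases ha : Movable O f d (f a) <;> by_cases hb : Movable O f d (f b) <;>
    simp only [ha, hb, if_true, if_false]
  · exact ⟨t, ht, by rw [hab]; abel⟩
  · obtain _ | _ | s := t
    · omega
    · exact absurd (by simpa [hab] using ha.add_of_occupied ⟨b, by simpa using hab⟩) hb
    · exact ⟨s + 1, by omega, by rw [hab, add_natCast_succ_smul]⟩
  · exact ⟨t + 1, by omega, by rw [hab, add_right_comm, add_natCast_succ_smul]⟩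
  · exact ⟨t, ht, hab⟩

lemma isAhead_mtilt {a b : Fin k} (h : IsAhead d (f a) (f b)) :
    IsAhead d (mtilt O d f a) (mtilt O d f b) :=
  Function.Iterate.rec (fun g : Fin k → ℤ × ℤ => IsAhead d (g a) (g b)) h
    (fun _ => isAhead_mstep) _

end Step

theorem tilt_preserves_order_general (m n : ℕ) (k : ℕ) (f : Fin k → ℤ × ℤ)
    (d : ℤ × ℤ) :
    let O : Finset (ℤ × ℤ) := Finset.Icc (1:ℤ) (m:ℤ) ×ˢ Finset.Icc (1:ℤ) (n:ℤ)
    ((d = ((1,0) : ℤ × ℤ) ∨ d = ((-1,0) : ℤ × ℤ)) →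
      ∀ a b : Fin k, (f a).2 = (f b).2 → (f a).1 < (f b).1 →
        (mtilt O d f a).1 < (mtilt O d f b).1) ∧
    ((d = ((0,1) : ℤ × ℤ) ∨ d = ((0,-1) : ℤ × ℤ)) →
      ∀ a b : Fin k, (f a).1 = (f b).1 → (f a).2 < (f b).2 →
        (mtilt O d f a).2 < (mtilt O d f b).2) := by
  intro O
  refine ⟨fun hd a b hrow hlt => ?_, fun hd a b hcol hlt => ?_⟩
  · have h := isAhead_east_iff.2 ⟨hrow, hlt⟩
    rcases hd with rfl | rfl
    · exact (isAhead_east_iff.1 (isAhead_mtilt h)).2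
    · exact (isAhead_east_iff.1 (isAhead_neg_iff.1 (isAhead_mtilt (isAhead_neg_iff.2 h)))).2
  · have h := isAhead_north_iff.2 ⟨hcol, hlt⟩
    rcases hd with rfl | rfl
    · exact (isAhead_north_iff.1 (isAhead_mtilt h)).2
    · exact (isAhead_north_iff.1 (isAhead_neg_iff.1 (isAhead_mtilt (isAhead_neg_iff.2 h)))).2

/-- on a rectangular board, non-bonding 1×1 tiles cannot pass through
each other: horizontal tilts preserve the strict west-of order within a row, and
vertical tilts preserve the strict south-of order within a column. -/
theorem tilt_preserves_order (m n : ℕ) (k : ℕ) (f : Fin k → ℤ × ℤ)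
    (hinj : Function.Injective f)
    (hin : ∀ i, f i ∈ Finset.Icc (1:ℤ) (m:ℤ) ×ˢ Finset.Icc (1:ℤ) (n:ℤ))
    (d : ℤ × ℤ) :
    let O : Finset (ℤ × ℤ) := Finset.Icc (1:ℤ) (m:ℤ) ×ˢ Finset.Icc (1:ℤ) (n:ℤ)
    ((d = ((1,0) : ℤ × ℤ) ∨ d = ((-1,0) : ℤ × ℤ)) →
      ∀ a b : Fin k, (f a).2 = (f b).2 → (f a).1 < (f b).1 →
        (mtilt O d f a).1 < (mtilt O d f b).1) ∧
    ((d = ((0,1) : ℤ × ℤ) ∨ d = ((0,-1) : ℤ × ℤ)) →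
      ∀ a b : Fin k, (f a).1 = (f b).1 → (f a).2 < (f b).2 →
        (mtilt O d f a).2 < (mtilt O d f b).2) :=
  tilt_preserves_order_general m n k f d
end

section
/- On a rectangular m×n board with k non-bonding 1×1 tiles, after a tilt in direction W, the tiles in each row are packed to the left: if a row contains j tiles, they occupy exactly the columns 1, 2, ..., j of that row. -/
open scoped Classical

/-!
Each step moves at least one tile one cell forward and never backward, so the number of open
cells lying ahead of the tiles (at most `|O| · k`) strictly decreases until a fixed point is
reached; hence the tilt is a fixed point of the step. Steps keep the tiles on the board and
distinct. At a fixed point no tile can move, so west of every tile not in column `1` there is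
another tile; the columns used in a row thus form a down-closed set of positive integers,
which is `{1, …, j}` with `j` the number of tiles in the row.
-/

lemma Movable.add_mem {k : ℕ} {O : Finset (ℤ × ℤ)} {f : Fin k → ℤ × ℤ} {d p : ℤ × ℤ}
    (h : Movable O f d p) : p + d ∈ O := by
  obtain ⟨j, hj, hO, -, -⟩ := h
  simpa using hO 1 le_rfl hj

lemma Movable.add {k : ℕ} {O : Finset (ℤ × ℤ)} {f : Fin k → ℤ × ℤ} {d p : ℤ × ℤ}
    (h : Movable O f d p) (hocc : Occupied f (p + d)) : Movable O f d (p + d) := by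
  obtain ⟨j, hj1, hO, hOcc, hfree⟩ := h
  have shift : ∀ i : ℕ, p + d + (i : ℤ) • d = p + ((i + 1 : ℕ) : ℤ) • d := fun i => by
    push_cast
    rw [add_smul, one_smul]
    abel
  have hj2 : 2 ≤ j := by
    by_contra hlt
    obtain rfl : j = 1 := by omega
    exact hfree (by simpa using hocc)
  refine ⟨j - 1, by omega, fun i h1 h2 => ?_, fun i h1 h2 => ?_, ?_⟩
  · rw [shift]
    exact hO (i + 1) (by omega) (by omega)
  · rw [shift]
    exact hOcc (i + 1) (by omega) (by omega)
  · rwa [shift, Nat.sub_add_cancel (by omega : 1 ≤ j)]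

/-- A tile moving onto an occupied cell pushes the occupant, which moves as well. -/
lemma mstep_injective {k : ℕ} {O : Finset (ℤ × ℤ)} {d : ℤ × ℤ} {f : Fin k → ℤ × ℤ}
    (hinj : Function.Injective f) : Function.Injective (mstep O d f) := by
  intro i i' h
  unfold mstep at h
  split_ifs at h with h1 h2 h2
  · exact hinj (add_right_cancel h)
  · exact absurd (h ▸ h1.add ⟨i', h.symm⟩) h2
  · exact absurd (h.symm ▸ h2.add ⟨i, h⟩) h1
  · exact hinj h

lemma mstep_mem {k : ℕ} {O : Finset (ℤ × ℤ)} {d : ℤ × ℤ} {f : Fin k → ℤ × ℤ}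
    (hin : ∀ i, f i ∈ O) (i : Fin k) : mstep O d f i ∈ O := by
  unfold mstep
  split_ifs with h
  · exact h.add_mem
  · exact hin i

lemma mtilt_injective {k : ℕ} {O : Finset (ℤ × ℤ)} {d : ℤ × ℤ} {f : Fin k → ℤ × ℤ}
    (hinj : Function.Injective f) : Function.Injective (mtilt O d f) :=
  Function.Iterate.rec (fun g => Function.Injective g) hinj (fun _ => mstep_injective) _

lemma mtilt_mem {k : ℕ} {O : Finset (ℤ × ℤ)} {d : ℤ × ℤ} {f : Fin k → ℤ × ℤ}
    (hin : ∀ i, f i ∈ O) (i : Fin k) : mtilt O d f i ∈ O :=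
  Function.Iterate.rec (fun g : Fin k → ℤ × ℤ => ∀ i, g i ∈ O) hin (fun _ => mstep_mem) _ i

noncomputable def ray (O : Finset (ℤ × ℤ)) (d p : ℤ × ℤ) : Finset (ℤ × ℤ) :=
  O.filter fun q => ∃ t : ℕ, 1 ≤ t ∧ q = p + (t : ℤ) • d

lemma ray_add_ssubset {O : Finset (ℤ × ℤ)} {d p : ℤ × ℤ} (hd : d ≠ 0) (hpd : p + d ∈ O) :
    ray O d (p + d) ⊂ ray O d p := by
  rw [Finset.ssubset_iff_of_subset]
  · refine ⟨p + d, Finset.mem_filter.mpr ⟨hpd, 1, le_rfl, by simp⟩, ?_⟩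
    intro hmem
    obtain ⟨t, ht, heq⟩ := (Finset.mem_filter.mp hmem).2
    have : (t : ℤ) • d = 0 := by simpa using heq
    exact smul_ne_zero (by omega) hd this
  · intro q hq
    obtain ⟨hqO, t, -, rfl⟩ := Finset.mem_filter.mp hq
    refine Finset.mem_filter.mpr ⟨hqO, t + 1, by omega, ?_⟩
    push_cast
    rw [add_smul, one_smul]
    abel

noncomputable def rayWeight {k : ℕ} (O : Finset (ℤ × ℤ)) (d : ℤ × ℤ) (f : Fin k → ℤ × ℤ) : ℕ :=
  ∑ i, (ray O d (f i)).card

lemma rayWeight_le {k : ℕ} (O : Finset (ℤ × ℤ)) (d : ℤ × ℤ) (f : Fin k → ℤ × ℤ) :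
    rayWeight O d f ≤ O.card * k := by
  calc rayWeight O d f ≤ ∑ _i : Fin k, O.card :=
        Finset.sum_le_sum fun i _ => Finset.card_filter_le _ _
    _ = O.card * k := by simp [mul_comm]

lemma rayWeight_mstep_lt {k : ℕ} {O : Finset (ℤ × ℤ)} {d : ℤ × ℤ} {f : Fin k → ℤ × ℤ}
    (hd : d ≠ 0) (h : mstep O d f ≠ f) : rayWeight O d (mstep O d f) < rayWeight O d f := by
  obtain ⟨i, hi⟩ := Function.ne_iff.mp h
  have hmov : Movable O f d (f i) := by
    by_contra hm
    exact hi (if_neg hm)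
  apply Finset.sum_lt_sum
  · intro j _
    unfold mstep
    split_ifs with hj
    · exact Finset.card_le_card (ray_add_ssubset hd hj.add_mem).subset
    · exact le_rfl
  · refine ⟨i, Finset.mem_univ i, ?_⟩
    simp only [mstep, if_pos hmov]
    exact Finset.card_lt_card (ray_add_ssubset hd hmov.add_mem)

lemma iterate_isFixedPt_of_lt {α : Type*} {F : α → α} (μ : α → ℕ)
    (h : ∀ a, F a ≠ a → μ (F a) < μ a) {N : ℕ} {a : α} (ha : μ a ≤ N) :
    Function.IsFixedPt F (F^[N] a) := by
  induction N generalizing a with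
  | zero =>
    by_contra hne
    have := h a hne
    omega
  | succ N ih =>
    by_cases hfa : F a = a
    · rw [Function.iterate_fixed hfa]
      exact hfa
    · rw [Function.iterate_succ_apply]
      exact ih (by have := h a hfa; omega)

lemma mstep_mtilt {k : ℕ} (O : Finset (ℤ × ℤ)) {d : ℤ × ℤ} (hd : d ≠ 0) (f : Fin k → ℤ × ℤ) :
    mstep O d (mtilt O d f) = mtilt O d f := by
  have hfix : Function.IsFixedPt (mstep O d) ((mstep O d)^[O.card * k] f) :=
    iterate_isFixedPt_of_lt (rayWeight O d) (fun _ => rayWeight_mstep_lt hd) (rayWeight_le O d f)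
  rw [mtilt, Function.iterate_succ_apply', hfix, hfix]

lemma occupied_add_of_mstep_eq_self {k : ℕ} {O : Finset (ℤ × ℤ)} {d : ℤ × ℤ}
    {g : Fin k → ℤ × ℤ} (hd : d ≠ 0) (hfix : mstep O d g = g) {i : Fin k} (hO : g i + d ∈ O) :
    Occupied g (g i + d) := by
  by_contra hfree
  have hmov : Movable O g d (g i) := by
    refine ⟨1, le_rfl, fun t h1 h2 => ?_, fun t h1 h2 => by omega, by simpa using hfree⟩
    obtain rfl : t = 1 := by omega
    simpa using hO
  have := congrFun hfix i
  simp only [mstep, if_pos hmov, add_eq_left] at this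
  exact hd this

lemma Finset.eq_Icc_one_card_of_sub_one_mem {S : Finset ℤ} (h1 : ∀ x ∈ S, 1 ≤ x)
    (hpred : ∀ x ∈ S, 2 ≤ x → x - 1 ∈ S) : S = Finset.Icc 1 (S.card : ℤ) := by
  have hdown : ∀ x, 1 ≤ x → x ∈ S → Finset.Icc 1 x ⊆ S := by
    intro x hx
    induction x, hx using Int.leInduction with
    | base => intro h1S; simpa using h1S
    | succ x hx ih =>
      intro hxS z hz
      rcases (Finset.mem_Icc.mp hz).2.eq_or_lt with rfl | hlt
      · exact hxS
      · exact ih (by simpa using hpred _ hxS (by omega))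
          (Finset.mem_Icc.mpr ⟨(Finset.mem_Icc.mp hz).1, by omega⟩)
  have hle : ∀ x ∈ S, x ≤ S.card := fun x hx => by
    have := Finset.card_le_card (hdown x (h1 x hx) hx)
    rw [Int.card_Icc] at this
    omega
  apply Finset.eq_of_subset_of_card_le
  · exact fun x hx => Finset.mem_Icc.mpr ⟨h1 x hx, hle x hx⟩
  · simp

/-- after a tilt west on a rectangular board, the tiles of each row
occupy exactly the columns `1, …, j` where `j` is the number of tiles in that row. -/
theorem tiltW_packs_left (m n : ℕ) (k : ℕ) (f : Fin k → ℤ × ℤ)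
    (hinj : Function.Injective f)
    (hin : ∀ i, f i ∈ Finset.Icc (1:ℤ) (m:ℤ) ×ˢ Finset.Icc (1:ℤ) (n:ℤ)) :
    let O : Finset (ℤ × ℤ) := Finset.Icc (1:ℤ) (m:ℤ) ×ˢ Finset.Icc (1:ℤ) (n:ℤ)
    let g := mtilt O ((-1,0) : ℤ × ℤ) f
    ∀ y : ℤ,
      (Finset.univ.filter fun i => (g i).2 = y).image (fun i => (g i).1) =
        Finset.Icc (1:ℤ) ((Finset.univ.filter fun i => (g i).2 = y).card : ℤ) := by
  intro O g y
  have hW : ((-1, 0) : ℤ × ℤ) ≠ 0 := by decide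
  have hfix : mstep O (-1, 0) g = g := mstep_mtilt O hW f
  have hgO : ∀ i, g i ∈ O := mtilt_mem hin
  have hrow_inj : Set.InjOn (fun i => (g i).1) (Finset.univ.filter fun i => (g i).2 = y) :=
    fun a ha b hb hab => mtilt_injective hinj <|
      Prod.ext hab ((Finset.mem_filter.mp ha).2.trans (Finset.mem_filter.mp hb).2.symm)
  rw [← Finset.card_image_of_injOn hrow_inj]
  apply Finset.eq_Icc_one_card_of_sub_one_mem
  · simp only [Finset.mem_image]
    rintro _ ⟨i, -, rfl⟩
    exact (Finset.mem_Icc.mp (Finset.mem_product.mp (hgO i)).1).1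
  · simp only [Finset.mem_image, Finset.mem_filter, Finset.mem_univ, true_and]
    rintro _ ⟨i, rfl, rfl⟩ h2
    have hwest : g i + (-1, 0) ∈ O := by
      have := Finset.mem_product.mp (hgO i)
      simp only [O, Finset.mem_product, Finset.mem_Icc, Prod.fst_add, Prod.snd_add] at this ⊢
      omega
    obtain ⟨j, hj⟩ := occupied_add_of_mstep_eq_self hW hfix hwest
    exact ⟨j, by simp [hj], by simp [hj, sub_eq_add_neg]⟩
end

section
/- There exists a polyomino that is not a drop shape; specifically, any polyomino containing an interior cell all four of whose axis-parallel rays to infinity are blocked by cells of the polyomino that must be placed earlier in every valid ordering (e.g., a shape consisting of a plus-sign frame enclosing a cell reachable only through a bent tunnel) admits no drop ordering. -/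
/-- Edge adjacency of two cells of ℤ². -/
def Adj (a b : ℤ × ℤ) : Prop := (a.1 - b.1).natAbs + (a.2 - b.2).natAbs = 1

/-- A list of cells is a drop ordering if each cell after the first is edge-adjacent
to some earlier cell, and admits a cardinal direction whose open ray avoids all
earlier cells. -/
def DropOrder (l : List (ℤ × ℤ)) : Prop :=
  ∀ i : Fin l.length, 1 ≤ i.1 →
    (∃ j : Fin l.length, j.1 < i.1 ∧ Adj (l.get i) (l.get j)) ∧
    (∃ d ∈ Dirs, ∀ k : ℕ, 1 ≤ k → ∀ j : Fin l.length, j.1 < i.1 →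
      l.get j ≠ l.get i + (k : ℤ) • d)

/-- A finite set of cells is a drop shape if its cells admit a drop ordering. -/
def IsDropShape (S : Finset (ℤ × ℤ)) : Prop :=
  ∃ l : List (ℤ × ℤ), l.Nodup ∧ l.toFinset = S ∧ DropOrder l

/-- A polyomino: a nonempty, edge-connected finite set of cells. -/
def IsPolyomino (S : Finset (ℤ × ℤ)) : Prop :=
  S.Nonempty ∧ ∀ a ∈ S, ∀ b ∈ S,
    Relation.ReflTransGen (fun x y => x ∈ S ∧ y ∈ S ∧ Adj x y) a b

/-- The witness polyomino: a single 41-cell path forming two "spiral chambers"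
(around `(0,0)` and `(10,0)`) joined by a corridor at `y = 3`. -/
def P : List (ℤ × ℤ) :=
  [(0,0),(0,1),(1,1),(2,1),(2,0),(2,-1),(2,-2),(1,-2),(0,-2),(-1,-2),(-2,-2),(-2,-1),(-2,0),(-2,1),(-2,2),
   (-2,3),(-1,3),(0,3),(1,3),(2,3),(3,3),(4,3),(5,3),(6,3),(7,3),(8,3),
   (8,2),(8,1),(8,0),(8,-1),(8,-2),(9,-2),(10,-2),(11,-2),(12,-2),(12,-1),(12,0),(12,1),(11,1),(10,1),(10,0)]

/-- Cell of `P` at position `m`. -/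
def pcell (m : ℕ) : ℤ × ℤ := P.getD m (0,0)

instance (a b : ℤ × ℤ) : Decidable (Adj a b) :=
  inferInstanceAs (Decidable ((a.1 - b.1).natAbs + (a.2 - b.2).natAbs = 1))

/-- `indexOf` with a pinned `BEq` instance, to match Mathlib's `DecidableEq`-based lemmas. -/
abbrev idxOf (l : List (ℤ × ℤ)) (x : ℤ × ℤ) : ℕ :=
  @List.idxOf (ℤ × ℤ) _ x l

lemma adj_symm {x y : ℤ × ℤ} (h : Adj x y) : Adj y x := by
  unfold Adj at *; omega

/-- A `Decidable` instance for `List.Chain` that reduces well in the kernel. -/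
instance (priority := 2000) decChain {α : Type*} (R : α → α → Prop) [DecidableRel R] :
    ∀ (a : α) (l : List α), Decidable (List.Chain R a l)
  | _, [] => isTrue List.Chain.nil
  | a, b :: t =>
    @decidable_of_iff _ _ List.chain_cons.symm
      (@instDecidableAnd _ _ _ (decChain R b t))

lemma reach_of_chain {α : Type*} (R : α → α → Prop) :
    ∀ (a : α) (lp : List α), List.Chain R a lp → ∀ b ∈ lp, Relation.ReflTransGen R a b := by
  intro a lp
  induction lp generalizing a with
  | nil => intro _ b hb; cases hb
  | cons c tl ih =>
    intro hch b hb
    rcases List.chain_cons.mp hch with ⟨hac, htl⟩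
    rcases List.mem_cons.mp hb with rfl | hb
    · exact Relation.ReflTransGen.single hac
    · exact Relation.ReflTransGen.head hac (ih c htl b hb)

/-- If `x` occurs at a positive index in a drop ordering and all of its neighbours
in the list are `u` or `v`, while `u` occurs later than `x`, then `v` occurs
earlier than `x`. -/
lemma midstep (l : List (ℤ × ℤ)) (hd : DropOrder l) (hnd : l.Nodup)
    (x u v : ℤ × ℤ) (hx : x ∈ l)
    (hnb : ∀ y ∈ l, Adj x y → y = u ∨ y = v)
    (hix : 1 ≤ idxOf l x) (hu : idxOf l x < idxOf l u) :
    idxOf l v < idxOf l x := by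
  have hlt : idxOf l x < l.length := List.idxOf_lt_length_iff.mpr hx
  obtain ⟨⟨j, hj, hadj⟩, -⟩ := hd ⟨idxOf l x, hlt⟩ hix
  rw [List.idxOf_get hlt] at hadj
  have hj' : (j : ℕ) < idxOf l x := hj
  have hmem : l.get j ∈ l := List.get_mem l j
  have hidx : idxOf l (l.get j) = j.1 := by
    have h2 : idxOf l (l.get j) < l.length := List.idxOf_lt_length_iff.mpr hmem
    have := (hnd.get_inj_iff (i := ⟨idxOf l (l.get j), h2⟩) (j := j)).mp
      (List.idxOf_get h2)
    simpa using congrArg Fin.val this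
  rcases hnb _ hmem hadj with rfl | rfl
  · omega
  · omega

/-- Endpoint version of `midstep`. -/
lemma endstep (l : List (ℤ × ℤ)) (hd : DropOrder l) (hnd : l.Nodup)
    (x v : ℤ × ℤ) (hx : x ∈ l)
    (hnb : ∀ y ∈ l, Adj x y → y = v)
    (hix : 1 ≤ idxOf l x) :
    idxOf l v < idxOf l x := by
  have hlt : idxOf l x < l.length := List.idxOf_lt_length_iff.mpr hx
  obtain ⟨⟨j, hj, hadj⟩, -⟩ := hd ⟨idxOf l x, hlt⟩ hix
  rw [List.idxOf_get hlt] at hadj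
  have hj' : (j : ℕ) < idxOf l x := hj
  have hmem : l.get j ∈ l := List.get_mem l j
  have hidx : idxOf l (l.get j) = j.1 := by
    have h2 : idxOf l (l.get j) < l.length := List.idxOf_lt_length_iff.mpr hmem
    have := (hnd.get_inj_iff (i := ⟨idxOf l (l.get j), h2⟩) (j := j)).mp
      (List.idxOf_get h2)
    simpa using congrArg Fin.val this
  rcases hnb _ hmem hadj with rfl
  omega

/-- The chamber lemma: if `q 0` is the centre of a spiral chamber whose access
tunnel is `q 1, q 2, …` (each tunnel cell having only its path neighbours as
neighbours in the list) and the tunnel blocks all four rays of `q 0`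
(via `q 1, q 4, q 8, q 12`), then the first cell of any drop ordering lies
among `q 0, …, q 11`. -/
lemma chamber (l : List (ℤ × ℤ)) (hd : DropOrder l) (hnd : l.Nodup)
    (q : ℕ → ℤ × ℤ)
    (hq : ∀ m, m ≤ 12 → q m ∈ l)
    (h0 : ∀ y ∈ l, Adj (q 0) y → y = q 1)
    (hm : ∀ m, m < 12 → 1 ≤ m → ∀ y ∈ l, Adj (q m) y → y = q (m-1) ∨ y = q (m+1))
    (hb1 : q 1 = q 0 + ((0:ℤ),(1:ℤ)))
    (hb4 : q 4 = q 0 + ((2:ℤ),(0:ℤ)))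
    (hb8 : q 8 = q 0 + ((0:ℤ),(-2:ℤ)))
    (hb12 : q 12 = q 0 + ((-2:ℤ),(0:ℤ))) :
    ∃ k, k ≤ 11 ∧ idxOf l (q k) = 0 := by
  by_cases h00 : idxOf l (q 0) = 0
  · exact ⟨0, by omega, h00⟩
  have H : ∀ m, m ≤ 11 → (∃ k, k ≤ 11 ∧ idxOf l (q k) = 0) ∨
      (∀ k, k ≤ m → idxOf l (q (k+1)) < idxOf l (q k)) := by
    intro m
    induction m with
    | zero =>
      intro _
      right
      intro k hk
      interval_cases k
      exact endstep l hd hnd (q 0) (q 1) (hq 0 (by omega)) h0 (by omega)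
    | succ n ih =>
      intro hn
      rcases ih (by omega) with h | hchain
      · exact Or.inl h
      by_cases hz : idxOf l (q (n+1)) = 0
      · exact Or.inl ⟨n+1, by omega, hz⟩
      have hstep : idxOf l (q (n+2)) < idxOf l (q (n+1)) := by
        have hnb := hm (n+1) (by omega) (by omega)
        have hnb' : ∀ y ∈ l, Adj (q (n+1)) y → y = q n ∨ y = q (n+2) := by
          intro y hy hadj
          simpa using hnb y hy hadj
        exact midstep l hd hnd (q (n+1)) (q n) (q (n+2)) (hq (n+1) (by omega))
          hnb' (by omega) (hchain n (le_refl n))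
      right
      intro k hk
      rcases Nat.lt_or_ge k (n+1) with hlt | hge
      · exact hchain k (by omega)
      · have : k = n + 1 := by omega
        subst this; exact hstep
  rcases H 11 (le_refl 11) with h | hchain
  · exact h
  exfalso
  -- all of q 1, q 4, q 8, q 12 occur strictly before q 0
  have c0 : idxOf l (q 1) < idxOf l (q 0) := hchain 0 (by omega); have c1 : idxOf l (q 2) < idxOf l (q 1) := hchain 1 (by omega)
  have c2 : idxOf l (q 3) < idxOf l (q 2) := hchain 2 (by omega); have c3 : idxOf l (q 4) < idxOf l (q 3) := hchain 3 (by omega)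
  have c4 : idxOf l (q 5) < idxOf l (q 4) := hchain 4 (by omega); have c5 : idxOf l (q 6) < idxOf l (q 5) := hchain 5 (by omega)
  have c6 : idxOf l (q 7) < idxOf l (q 6) := hchain 6 (by omega); have c7 : idxOf l (q 8) < idxOf l (q 7) := hchain 7 (by omega)
  have c8 : idxOf l (q 9) < idxOf l (q 8) := hchain 8 (by omega); have c9 : idxOf l (q 10) < idxOf l (q 9) := hchain 9 (by omega)
  have c10 : idxOf l (q 11) < idxOf l (q 10) := hchain 10 (by omega); have c11 : idxOf l (q 12) < idxOf l (q 11) := hchain 11 (by omega)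
  have hlt0 : idxOf l (q 0) < l.length := List.idxOf_lt_length_iff.mpr (hq 0 (by omega))
  obtain ⟨-, d, hdmem, hray⟩ := hd ⟨idxOf l (q 0), hlt0⟩ (show 1 ≤ idxOf l (q 0) by omega)
  have hgetq : ∀ m, m ≤ 12 → ∀ (h : idxOf l (q m) < l.length),
      l.get ⟨idxOf l (q m), h⟩ = q m := fun m _ h => List.idxOf_get h
  simp only [Dirs, Finset.mem_insert, Finset.mem_singleton] at hdmem
  rcases hdmem with rfl | rfl | rfl | rfl
  · have hmlt : idxOf l (q 1) < l.length := List.idxOf_lt_length_iff.mpr (hq 1 (by omega))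
    have := hray 1 (le_refl 1) ⟨idxOf l (q 1), hmlt⟩ (show idxOf l (q 1) < idxOf l (q 0) by omega)
    rw [hgetq 1 (by omega) hmlt, hgetq 0 (by omega) hlt0] at this
    exact this (by rw [hb1]; norm_num)
  · have hmlt : idxOf l (q 4) < l.length := List.idxOf_lt_length_iff.mpr (hq 4 (by omega))
    have := hray 2 (by omega) ⟨idxOf l (q 4), hmlt⟩ (show idxOf l (q 4) < idxOf l (q 0) by omega)
    rw [hgetq 4 (by omega) hmlt, hgetq 0 (by omega) hlt0] at this
    exact this (by rw [hb4]; norm_num)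
  · have hmlt : idxOf l (q 8) < l.length := List.idxOf_lt_length_iff.mpr (hq 8 (by omega))
    have := hray 2 (by omega) ⟨idxOf l (q 8), hmlt⟩ (show idxOf l (q 8) < idxOf l (q 0) by omega)
    rw [hgetq 8 (by omega) hmlt, hgetq 0 (by omega) hlt0] at this
    exact this (by rw [hb8]; norm_num)
  · have hmlt : idxOf l (q 12) < l.length := List.idxOf_lt_length_iff.mpr (hq 12 (by omega))
    have := hray 2 (by omega) ⟨idxOf l (q 12), hmlt⟩ (show idxOf l (q 12) < idxOf l (q 0) by omega)
    rw [hgetq 12 (by omega) hmlt, hgetq 0 (by omega) hlt0] at this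
    exact this (by rw [hb12]; norm_num)

/-- there exists a polyomino that is not a drop shape. -/
theorem exists_non_drop_polyomino :
    ∃ S : Finset (ℤ × ℤ), IsPolyomino S ∧ ¬ IsDropShape S := by
  refine ⟨P.toFinset, ⟨⟨(0,0), by decide⟩, ?_⟩, ?_⟩
  · -- connectivity
    intro a ha b hb
    set R : ℤ × ℤ → ℤ × ℤ → Prop :=
      fun x y => x ∈ P.toFinset ∧ y ∈ P.toFinset ∧ Adj x y with hR
    have hsym : Symmetric R := by
      intro x y ⟨h1, h2, h3⟩; exact ⟨h2, h1, adj_symm h3⟩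
    have hch0 : List.Chain (fun x y => x ∈ P ∧ y ∈ P ∧ Adj x y) (0,0)
        [((0:ℤ),(1:ℤ)),(1,1),(2,1),(2,0),(2,-1),(2,-2),(1,-2),(0,-2),(-1,-2),(-2,-2),(-2,-1),(-2,0),(-2,1),(-2,2),
         (-2,3),(-1,3),(0,3),(1,3),(2,3),(3,3),(4,3),(5,3),(6,3),(7,3),(8,3),
         (8,2),(8,1),(8,0),(8,-1),(8,-2),(9,-2),(10,-2),(11,-2),(12,-2),(12,-1),(12,0),(12,1),(11,1),(10,1),(10,0)] := by
      decide
    have hch : List.Chain R (0,0)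
        [((0:ℤ),(1:ℤ)),(1,1),(2,1),(2,0),(2,-1),(2,-2),(1,-2),(0,-2),(-1,-2),(-2,-2),(-2,-1),(-2,0),(-2,1),(-2,2),
         (-2,3),(-1,3),(0,3),(1,3),(2,3),(3,3),(4,3),(5,3),(6,3),(7,3),(8,3),
         (8,2),(8,1),(8,0),(8,-1),(8,-2),(9,-2),(10,-2),(11,-2),(12,-2),(12,-1),(12,0),(12,1),(11,1),(10,1),(10,0)] :=
      List.IsChain.imp (fun a b ⟨h1, h2, h3⟩ =>
        ⟨List.mem_toFinset.mpr h1, List.mem_toFinset.mpr h2, h3⟩) hch0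
    have hreach : ∀ c ∈ P, Relation.ReflTransGen R (0,0) c := by
      intro c hc
      rcases List.mem_cons.mp hc with rfl | hc
      · exact Relation.ReflTransGen.refl
      · exact reach_of_chain R (0,0) _ hch c hc
    have ha' : a ∈ P := List.mem_toFinset.mp ha
    have hb' : b ∈ P := List.mem_toFinset.mp hb
    haveI : Std.Symm R := ⟨hsym⟩
    exact ((Std.Symm.symm (r := Relation.ReflTransGen R) _ _ (hreach a ha'))).trans (hreach b hb')
  · rintro ⟨l, hnd, hSl, hdrop⟩
    have hmem : ∀ x, x ∈ l ↔ x ∈ P := by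
      intro x
      rw [← List.mem_toFinset, hSl, List.mem_toFinset]
    -- chamber 1
    have hc1 : ∃ k, k ≤ 11 ∧ idxOf l (pcell k) = 0 := by
      apply chamber l hdrop hnd pcell
      · intro m hm
        rw [hmem]
        revert hm; revert m; decide
      · intro y hy hadj
        rw [hmem] at hy
        revert hadj; revert hy; revert y; decide
      · intro m hm12 hm1 y hy hadj
        rw [hmem] at hy
        have hgen : ∀ m < 12, 1 ≤ m → ∀ y ∈ P, Adj (pcell m) y →
            y = pcell (m - 1) ∨ y = pcell (m + 1) := by decide
        exact hgen m hm12 hm1 y hy hadj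
      · decide
      · decide
      · decide
      · decide
    -- chamber 2
    have hc2 : ∃ k, k ≤ 11 ∧ idxOf l (pcell (40 - k)) = 0 := by
      apply chamber l hdrop hnd (fun m => pcell (40 - m))
      · intro m hm
        rw [hmem]
        revert hm; revert m; decide
      · intro y hy hadj
        rw [hmem] at hy
        revert hadj; revert hy; revert y; decide
      · intro m hm12 hm1 y hy hadj
        rw [hmem] at hy
        have e1 : 40 - (m - 1) = 41 - m := by omega
        have e2 : 40 - (m + 1) = 39 - m := by omega
        simp only [e1, e2]
        have hgen : ∀ m', m' < 12 → 1 ≤ m' → ∀ y ∈ P, Adj (pcell (40 - m')) y →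
            y = pcell (41 - m') ∨ y = pcell (39 - m') := by decide
        exact hgen m hm12 hm1 y hy hadj
      · decide
      · decide
      · decide
      · decide
    obtain ⟨k, hk, hk0⟩ := hc1
    obtain ⟨k', hk', hk0'⟩ := hc2
    have hkP : pcell k ∈ l := by
      rw [hmem]
      have : ∀ k ≤ 11, pcell k ∈ P := by decide
      exact this k hk
    have hkP' : pcell (40 - k') ∈ l := by
      rw [hmem]
      have : ∀ k' ≤ 11, pcell (40 - k') ∈ P := by decide
      exact this k' hk'
    have hlt1 : idxOf l (pcell k) < l.length := List.idxOf_lt_length_iff.mpr hkP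
    have hlt2 : idxOf l (pcell (40 - k')) < l.length := List.idxOf_lt_length_iff.mpr hkP'
    have heq : pcell k = pcell (40 - k') := by
      rw [← List.idxOf_get hlt1, ← List.idxOf_get hlt2]
      congr 1
      exact Fin.ext (by simp [hk0, hk0'])
    have hne : ∀ k ≤ 11, ∀ k' ≤ 11, pcell k ≠ pcell (40 - k') := by decide
    exact hne k hk k' hk' heq
end
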